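/- (Linear independence of the Abelian integrals I_0 and I_2.) If λ₁, λ₄ are real numbers such that λ₁·I_0(h) + λ₄·I_2(h) = 0 for every h > 0, then λ₁ = 0 and λ₄ = 0. -/
import Mathlib

open Real Set Filter intervalIntegral

/-- Right endpoint of the exterior oval: `x_max(h) = √(1 + √(1+4h))`. -/
noncomputable def xmax (h : ℝ) : ℝ := Real.sqrt (1 + Real.sqrt (1 + 4*h))

/-- Complete elliptic integral `I_i(h) = ∫_{-x_max}^{x_max} x^i √(2h + x² - x⁴/2) dx`. -/
noncomputable def ellI (i : ℕ) (h : ℝ) : ℝ :=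
  ∫ x in (-xmax h)..(xmax h), x^i * Real.sqrt (2*h + x^2 - x^4/2)

/-- Complete elliptic integral `I'_i(h) = ∫_{-x_max}^{x_max} x^i (2h + x² - x⁴/2)^{-1/2} dx`. -/
noncomputable def ellI' (i : ℕ) (h : ℝ) : ℝ :=
  ∫ x in (-xmax h)..(xmax h), x^i / Real.sqrt (2*h + x^2 - x^4/2)

lemma contInt (i : ℕ) (h : ℝ) :
    Continuous fun x : ℝ => x^i * Real.sqrt (2*h + x^2 - x^4/2) := by
  apply Continuous.mul (by fun_prop)
  exact Real.continuous_sqrt.comp (by fun_prop)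

lemma xmax_pos {h : ℝ} (hh : 0 < h) : 0 < xmax h := by
  apply Real.sqrt_pos.mpr
  positivity

lemma xmax_sq (h : ℝ) (hh : 0 ≤ h) : (xmax h)^2 = 1 + Real.sqrt (1 + 4*h) := by
  rw [xmax, Real.sq_sqrt]
  positivity

lemma ellI0_pos {h : ℝ} (hh : 0 < h) : 0 < ellI 0 h := by
  rw [ellI]
  apply intervalIntegral_pos_of_pos_on ((contInt 0 h).intervalIntegrable _ _)
  · intro x hx
    have hx2 : x^2 < (xmax h)^2 := sq_lt_sq' hx.1 hx.2
    rw [xmax_sq h hh.le] at hx2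
    have hs : (Real.sqrt (1 + 4*h))^2 = 1 + 4*h := Real.sq_sqrt (by positivity)
    have hs0 : 0 ≤ Real.sqrt (1 + 4*h) := Real.sqrt_nonneg _
    have hs1 : 1 < Real.sqrt (1 + 4*h) := by nlinarith
    have key : 0 < 2*h + x^2 - x^4/2 := by nlinarith [sq_nonneg x]
    simpa using Real.sqrt_pos.mpr key
  · simpa using neg_lt_self (xmax_pos hh)

/-- Key growth estimate: for `r ≥ 1` and `h = r²`, `|l1| I₀(h) = |l4| I₂(h)` forces
`|l4| r ≤ 24 √6 |l1|`. -/
lemma ellI_bound (r : ℝ) (hr1 : 1 ≤ r) (l1 l4 : ℝ)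
    (heq : l1 * ellI 0 (r^2) + l4 * ellI 2 (r^2) = 0) :
    |l4| * (2*r) ≤ 48 * Real.sqrt 6 * |l1| := by
  set h : ℝ := r^2 with hdef
  have hh1 : 1 ≤ h := by nlinarith
  have hh : 0 < h := by linarith
  have hrsq : Real.sqrt h = r := Real.sqrt_sq (by linarith)
  have hs : (Real.sqrt (1 + 4*h))^2 = 1 + 4*h := Real.sq_sqrt (by positivity)
  have hsle : Real.sqrt (1 + 4*h) ≤ 1 + 2*r := by
    rw [show (1:ℝ) + 2*r = Real.sqrt ((1+2*r)^2) from (Real.sqrt_sq (by linarith)).symm]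
    apply Real.sqrt_le_sqrt; nlinarith
  have hsge : 2*r ≤ Real.sqrt (1 + 4*h) := by
    rw [show (2:ℝ)*r = Real.sqrt ((2*r)^2) from (Real.sqrt_sq (by linarith)).symm]
    apply Real.sqrt_le_sqrt; nlinarith
  have hx2 : (xmax h)^2 = 1 + Real.sqrt (1 + 4*h) := xmax_sq h hh.le
  have hxle : (xmax h)^2 ≤ 4*r := by rw [hx2]; linarith
  have hxge : 2*r ≤ (xmax h)^2 := by rw [hx2]; linarith
  have hxpos : 0 < xmax h := xmax_pos hh
  -- upper bound on I0
  have hI0 : ellI 0 h ≤ 2 * xmax h * Real.sqrt (6*h) := by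
    rw [ellI]
    have hmono : ∫ x in (-xmax h)..(xmax h), x^0 * Real.sqrt (2*h + x^2 - x^4/2)
        ≤ ∫ _ in (-xmax h)..(xmax h), Real.sqrt (6*h) := by
      apply intervalIntegral.integral_mono_on (by linarith)
        ((contInt 0 h).intervalIntegrable _ _) (intervalIntegrable_const)
      intro x hx
      have hx2' : x^2 ≤ (xmax h)^2 := sq_le_sq' hx.1 hx.2
      simp only [pow_zero, one_mul]
      apply Real.sqrt_le_sqrt
      nlinarith [sq_nonneg x]
    rw [intervalIntegral.integral_const] at hmono
    simp only [smul_eq_mul] at hmono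
    linarith
  -- lower bound on I2
  have hI2 : Real.sqrt h * (xmax h)^3 / 24 ≤ ellI 2 h := by
    have hstep1 : ∫ x in (0:ℝ)..(xmax h / 2), x^2 * Real.sqrt h
        ≤ ∫ x in (0:ℝ)..(xmax h / 2), x^2 * Real.sqrt (2*h + x^2 - x^4/2) := by
      apply intervalIntegral.integral_mono_on (by linarith)
        (by apply Continuous.intervalIntegrable; fun_prop)
        ((contInt 2 h).intervalIntegrable _ _)
      intro x hx
      have hx0 : 0 ≤ x := hx.1
      have hxu : x ≤ xmax h / 2 := hx.2
      have hxq : x^2 ≤ (xmax h)^2/4 := by nlinarith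
      have hx4 : x^4 ≤ (xmax h)^4 / 16 := by nlinarith [sq_nonneg x, sq_nonneg (xmax h)]
      have hx16 : (xmax h)^4 ≤ 16*h := by nlinarith [sq_nonneg (xmax h)]
      have hx4' : x^4 ≤ h := by nlinarith
      apply mul_le_mul_of_nonneg_left _ (sq_nonneg x)
      apply Real.sqrt_le_sqrt
      nlinarith [sq_nonneg x]
    have hstep2 : ∫ x in (0:ℝ)..(xmax h / 2), x^2 * Real.sqrt (2*h + x^2 - x^4/2)
        ≤ ellI 2 h := by
      rw [ellI]
      apply intervalIntegral.integral_mono_interval (by linarith) (by linarith) (by linarith)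
      · filter_upwards with x; positivity
      · exact (contInt 2 h).intervalIntegrable _ _
    have hval : ∫ x in (0:ℝ)..(xmax h / 2), x^2 * Real.sqrt h
        = (xmax h / 2)^3 / 3 * Real.sqrt h := by
      rw [intervalIntegral.integral_mul_const, integral_pow]
      norm_num
    have hval' : Real.sqrt h * (xmax h)^3 / 24 = (xmax h / 2)^3 / 3 * Real.sqrt h := by ring
    linarith [hstep1, hstep2, hval.ge, hval.le]
  -- combine
  have hI0pos := ellI0_pos hh
  have hI2pos : 0 < ellI 2 h := by
    have hp : 0 < Real.sqrt h * (xmax h)^3 / 24 := by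
      have := Real.sqrt_pos.mpr hh
      positivity
    linarith
  have habs : |l1| * ellI 0 h = |l4| * ellI 2 h := by
    have h1 : l1 * ellI 0 h = -(l4 * ellI 2 h) := by linarith
    have h2 := congrArg abs h1
    rwa [abs_neg, abs_mul, abs_mul, abs_of_pos hI0pos, abs_of_pos hI2pos] at h2
  have hsqrt6 : Real.sqrt (6*h) = Real.sqrt 6 * r := by
    rw [Real.sqrt_mul (by norm_num), hrsq]
  have h6pos : 0 < Real.sqrt 6 := Real.sqrt_pos.mpr (by norm_num)
  have hc1 : |l4| * (Real.sqrt h * (xmax h)^3 / 24) ≤ |l1| * (2 * xmax h * Real.sqrt (6*h)) :=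
    calc |l4| * (Real.sqrt h * (xmax h)^3 / 24) ≤ |l4| * ellI 2 h :=
          mul_le_mul_of_nonneg_left hI2 (abs_nonneg l4)
      _ = |l1| * ellI 0 h := habs.symm
      _ ≤ |l1| * (2 * xmax h * Real.sqrt (6*h)) :=
          mul_le_mul_of_nonneg_left hI0 (abs_nonneg l1)
  rw [hrsq, hsqrt6] at hc1
  -- cancel r * xmax from both sides
  have e1 : |l4| * (r * (xmax h)^3 / 24) = (|l4| * (xmax h)^2 / 24) * (r * xmax h) := by ring
  have e2 : |l1| * (2 * xmax h * (Real.sqrt 6 * r)) = (2 * Real.sqrt 6 * |l1|) * (r * xmax h) := by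
    ring
  rw [e1, e2] at hc1
  have h3 := le_of_mul_le_mul_right hc1 (mul_pos (show (0:ℝ) < r by linarith) hxpos)
  have hxc : |l4| * (xmax h)^2 ≤ 48 * Real.sqrt 6 * |l1| := by linarith
  exact le_trans (mul_le_mul_of_nonneg_left hxge (abs_nonneg l4)) hxc

/-- Linear independence of the Abelian integrals `I₀` and `I₂`. -/
theorem ellI_linear_independent (l1 l4 : ℝ)
    (hzero : ∀ h : ℝ, 0 < h → l1 * ellI 0 h + l4 * ellI 2 h = 0) :
    l1 = 0 ∧ l4 = 0 := by
  have hl4 : l4 = 0 := by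
    by_contra hl4
    have hl4' : 0 < |l4| := abs_pos.mpr hl4
    set r : ℝ := max 1 (24 * Real.sqrt 6 * |l1| / |l4| + 1) with hrdef
    have hr1 : 1 ≤ r := le_max_left _ _
    have hrM : 24 * Real.sqrt 6 * |l1| / |l4| < r :=
      lt_of_lt_of_le (by linarith) (le_max_right _ _)
    have hb := ellI_bound r hr1 l1 l4 (hzero (r^2) (by nlinarith))
    have : 24 * Real.sqrt 6 * |l1| / |l4| ≥ r := by
      rw [ge_iff_le, le_div_iff₀ hl4']
      nlinarith
    linarith
  refine ⟨?_, hl4⟩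
  have h1 := hzero 1 one_pos
  rw [hl4] at h1
  have hp := ellI0_pos (h := 1) one_pos
  have h2 : l1 * ellI 0 1 = 0 := by linarith
  rcases mul_eq_zero.mp h2 with h | h
  · exact h
  · exact absurd h (ne_of_gt hp)
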